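/- arXiv:1302.6196 — 9 statements merged into one kernel-verified Lean document; each statement's English description precedes it below -/
import Mathlib

section
/- For the polynomials F_n defined by F_{n+1}(x) = x F_n(x) - 4n^2(4n^2-1) F_{n-1}(x) with F_0 = 1, F_1(x) = x, every zero x of F_n (for n ≥ 1) satisfies |x| < 8n^2 · sqrt(1 - 1/(4n^2)). -/
private lemma chen_ismail_aux (F : ℕ → ℝ → ℝ) (n : ℕ) (y : ℝ)
    (h0 : ∀ x, F 0 x = 1) (h1 : ∀ x, F 1 x = x)
    (hrec : ∀ m : ℕ, 1 ≤ m → ∀ x : ℝ,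
      F (m + 1) x = x * F m x - 4 * (m : ℝ) ^ 2 * (4 * (m : ℝ) ^ 2 - 1) * F (m - 1) x)
    (hypos : 0 < y)
    (hy2 : 16 * (n:ℝ)^2 * (4*(n:ℝ)^2 - 1) ≤ y^2) :
    ∀ k : ℕ, 1 ≤ k → k ≤ n → y/2 * F (k-1) y ≤ F k y ∧ 0 < F k y := by
  intro k
  induction k with
  | zero => omega
  | succ m ih =>
    intro _ hkn
    rcases Nat.eq_zero_or_pos m with hm | hm
    · subst hm
      refine ⟨?_, by simpa [h1] using hypos⟩
      simp only [Nat.sub_self, h0, h1]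
      linarith
    · have hmn : m ≤ n := le_of_lt (Nat.lt_of_lt_of_le (Nat.lt_succ_self m) hkn)
      obtain ⟨ih1, ih2⟩ := ih hm hmn
      have hrec' := hrec m hm y
      have hm1 : (1:ℝ) ≤ (m:ℝ) := by exact_mod_cast hm
      have hmn' : (m:ℝ) ≤ (n:ℝ) := by exact_mod_cast hmn
      have hm2 : (1:ℝ) ≤ (m:ℝ)^2 := by nlinarith
      have hm2n : (m:ℝ)^2 ≤ (n:ℝ)^2 := by nlinarith
      have hc : (0:ℝ) ≤ 4 * (m : ℝ) ^ 2 * (4 * (m : ℝ) ^ 2 - 1) := by nlinarith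
      have hstep : 16 * (m:ℝ)^2 * (4*(m:ℝ)^2 - 1) ≤ 16 * (n:ℝ)^2 * (4*(n:ℝ)^2 - 1) := by
        nlinarith [mul_nonneg (sub_nonneg.2 hm2n)
          (show (0:ℝ) ≤ 64*((n:ℝ)^2+(m:ℝ)^2)-16 by nlinarith)]
      have hcle : 16 * (m:ℝ)^2 * (4*(m:ℝ)^2 - 1) ≤ y^2 := le_trans hstep hy2
      have h1' : y * F (m-1) y ≤ 2 * F m y := by nlinarith
      set c := 4 * (m:ℝ)^2 * (4*(m:ℝ)^2 - 1) with hcdef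
      have e1 : c * (y * F (m-1) y) ≤ c * (2 * F m y) :=
        mul_le_mul_of_nonneg_left h1' hc
      have e2 : (4*c) * F m y ≤ y^2 * F m y :=
        mul_le_mul_of_nonneg_right (by rw [hcdef]; linarith) ih2.le
      have hkey : y * 0 ≤ y * ((y * F m y - c * F (m-1) y) - y/2 * F m y) := by
        nlinarith [e1, e2]
      have hd := le_of_mul_le_mul_left hkey hypos
      have hmain : y/2 * F m y ≤ F (m+1) y := by
        rw [hrec']
        linarith
      exact ⟨hmain, lt_of_lt_of_le (by positivity) hmain⟩

private lemma chen_ismail_parity (F : ℕ → ℝ → ℝ) (y : ℝ)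
    (h0 : ∀ x, F 0 x = 1) (h1 : ∀ x, F 1 x = x)
    (hrec : ∀ m : ℕ, 1 ≤ m → ∀ x : ℝ,
      F (m + 1) x = x * F m x - 4 * (m : ℝ) ^ 2 * (4 * (m : ℝ) ^ 2 - 1) * F (m - 1) x) :
    ∀ k : ℕ, F k (-y) = (-1)^k * F k y ∧
      F (k+1) (-y) = (-1)^(k+1) * F (k+1) y := by
  intro k
  induction k with
  | zero => simp [h0, h1]
  | succ m ih =>
    refine ⟨ih.2, ?_⟩
    have hr1 := hrec (m+1) (by omega) (-y)
    have hr2 := hrec (m+1) (by omega) y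
    simp only [Nat.add_sub_cancel] at hr1 hr2
    rw [hr1, hr2, ih.1, ih.2]
    ring

/-- Every zero of the Chen–Ismail polynomial `F n` (for `n ≥ 1`) satisfies
`|x| < 8 n² √(1 - 1/(4n²))`. -/
theorem stmt_0 (F : ℕ → ℝ → ℝ)
    (h0 : ∀ x, F 0 x = 1) (h1 : ∀ x, F 1 x = x)
    (hrec : ∀ n : ℕ, 1 ≤ n → ∀ x : ℝ,
      F (n + 1) x = x * F n x - 4 * (n : ℝ) ^ 2 * (4 * (n : ℝ) ^ 2 - 1) * F (n - 1) x)
    (n : ℕ) (hn : 1 ≤ n) (x : ℝ) (hx : F n x = 0) :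
    |x| < 8 * (n : ℝ) ^ 2 * Real.sqrt (1 - 1 / (4 * (n : ℝ) ^ 2)) := by
  by_contra hcon
  push_neg at hcon
  have hn1 : (1:ℝ) ≤ (n:ℝ) := by exact_mod_cast hn
  have h4 : (0:ℝ) < 4 * (n:ℝ)^2 := by positivity
  have hB2 : (8 * (n : ℝ) ^ 2 * Real.sqrt (1 - 1 / (4 * (n : ℝ) ^ 2)))^2
      = 16 * (n:ℝ)^2 * (4*(n:ℝ)^2 - 1) := by
    rw [mul_pow, mul_pow,
      Real.sq_sqrt (by rw [sub_nonneg, div_le_one h4]; nlinarith)]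
    field_simp
    ring
  have hBpos : 0 < 8 * (n : ℝ) ^ 2 * Real.sqrt (1 - 1 / (4 * (n : ℝ) ^ 2)) := by
    have hp : 0 < 1 - 1 / (4 * (n:ℝ)^2) := by
      rw [sub_pos, div_lt_one h4]; nlinarith
    positivity
  have hypos : 0 < |x| := lt_of_lt_of_le hBpos hcon
  have hy2 : 16 * (n:ℝ)^2 * (4*(n:ℝ)^2 - 1) ≤ |x|^2 := by
    rw [← hB2]; exact pow_le_pow_left₀ hBpos.le hcon 2
  obtain ⟨-, hpos⟩ := chen_ismail_aux F n |x| h0 h1 hrec hypos hy2 n hn le_rfl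
  rcases abs_choice x with hax | hax
  · rw [hax] at hpos
    exact hpos.ne' hx
  · have hxy : x = -|x| := by rw [hax, neg_neg]
    rw [hxy, (chen_ismail_parity F |x| h0 h1 hrec n).1] at hx
    have hz : F n |x| = 0 := by
      rcases mul_eq_zero.1 hx with h | h
      · exact absurd h (pow_ne_zero n (by norm_num))
      · exact h
    exact hpos.ne' hz
end

section
/- The sequence A_n = K_n/K_{n+1}, where K_n = 2^{4n} Γ((n+1)/2)^2 Γ((n+3/2)/2) Γ((n+1/2)/2), satisfies A_n = (1/4)n^{-2} - (1/4)n^{-3} + O(n^{-4}) as n → ∞. -/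
/-!
Put W(x) = Γ(x + 1/2) / Γ(x + 1). The functional equation of Γ gives A_n = W(n/2)² / (8n + 4)
and W(x + 1) = (x + 1/2)/(x + 1) · W(x), while log-convexity of Γ gives the crude bounds
1/(x + 1/2) ≤ W(x)² ≤ 1/x. By the recursion, W(x + k)² (x + k + 1/4) increases and
W(x + k)² (x + k + 1/4 + 1/(32(x + k))) decreases in k; the crude bounds force both to tend to 1,
so 1/(x + 1/4 + 1/(32x)) ≤ W(x)² ≤ 1/(x + 1/4). At x = n/2 these pin A_n to within n⁻⁴ of
n⁻²/4 - n⁻³/4.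
-/

open Real Filter Topology Asymptotics

theorem Real.Gamma_midpoint_sq_le {s t : ℝ} (hs : 0 < s) (ht : 0 < t) :
    Gamma ((s + t) / 2) ^ 2 ≤ Gamma s * Gamma t := by
  have h := Gamma_mul_add_mul_le_rpow_Gamma_mul_rpow_Gamma hs ht one_half_pos one_half_pos
    (add_halves 1)
  rw [← sqrt_eq_rpow, ← sqrt_eq_rpow, ← sqrt_mul (Gamma_pos_of_pos hs).le,
    show 1 / 2 * s + 1 / 2 * t = (s + t) / 2 by ring] at h
  calc Gamma ((s + t) / 2) ^ 2 ≤ √(Gamma s * Gamma t) ^ 2 := by gcongr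
    _ = Gamma s * Gamma t :=
        sq_sqrt (mul_nonneg (Gamma_pos_of_pos hs).le (Gamma_pos_of_pos ht).le)

theorem tendsto_add_div_add_atTop (a b : ℝ) :
    Tendsto (fun t : ℝ => (t + a) / (t + b)) atTop (𝓝 1) := by
  have hden : Tendsto (fun t : ℝ => t + b) atTop atTop :=
    tendsto_atTop_add_const_right _ b tendsto_id
  have h : Tendsto (fun t : ℝ => 1 + (a - b) / (t + b)) atTop (𝓝 (1 + 0)) :=
    tendsto_const_nhds.add (tendsto_const_nhds.div_atTop hden)
  rw [add_zero] at h
  refine h.congr' ?_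
  filter_upwards [hden.eventually_gt_atTop 0] with t ht
  field_simp
  ring

noncomputable def gammaHalfRatio (x : ℝ) : ℝ := Gamma (x + 1 / 2) / Gamma (x + 1)

section gammaHalfRatio

variable {x : ℝ}

theorem gammaHalfRatio_add_one (hx : 0 < x + 1 / 2) :
    gammaHalfRatio (x + 1) = (x + 1 / 2) / (x + 1) * gammaHalfRatio x := by
  have hΓ : Gamma (x + 1) ≠ 0 := (Gamma_pos_of_pos (by linarith)).ne'
  rw [gammaHalfRatio, gammaHalfRatio, add_right_comm, Gamma_add_one hx.ne',
    Gamma_add_one (by linarith)]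
  field_simp

theorem inv_le_gammaHalfRatio_sq (hx : 0 < x + 1 / 2) :
    (x + 1 / 2)⁻¹ ≤ gammaHalfRatio x ^ 2 := by
  have h := Gamma_midpoint_sq_le hx (by linarith : 0 < x + 1 / 2 + 1)
  rw [Gamma_add_one hx.ne', show (x + 1 / 2 + (x + 1 / 2 + 1)) / 2 = x + 1 by ring] at h
  have hΓ : 0 < Gamma (x + 1) := Gamma_pos_of_pos (by linarith)
  rw [gammaHalfRatio, div_pow, le_div_iff₀ (by positivity), inv_mul_le_iff₀ hx]
  linarith

theorem gammaHalfRatio_sq_le_inv (hx : 0 < x) : gammaHalfRatio x ^ 2 ≤ x⁻¹ := by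
  have h := Gamma_midpoint_sq_le hx (by linarith : 0 < x + 1)
  rw [show (x + (x + 1)) / 2 = x + 1 / 2 by ring] at h
  rw [gammaHalfRatio, div_pow, div_le_iff₀ (by positivity), Gamma_add_one hx.ne']
  calc Gamma (x + 1 / 2) ^ 2 ≤ Gamma x * (x * Gamma x) := by rwa [Gamma_add_one hx.ne'] at h
    _ = x⁻¹ * (x * Gamma x) ^ 2 := by field_simp

theorem gammaHalfRatio_sq_mul_le_succ (hx : 0 < x + 1 / 2) :
    gammaHalfRatio x ^ 2 * (x + 1 / 4) ≤ gammaHalfRatio (x + 1) ^ 2 * (x + 1 + 1 / 4) := by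
  have hx1 : x + 1 ≠ 0 := by linarith
  have h : gammaHalfRatio (x + 1) ^ 2 * (x + 1 + 1 / 4) - gammaHalfRatio x ^ 2 * (x + 1 / 4) =
      gammaHalfRatio x ^ 2 / (16 * (x + 1) ^ 2) := by
    rw [gammaHalfRatio_add_one hx]
    field_simp
    ring
  exact sub_nonneg.1 (h ▸ by positivity)

theorem gammaHalfRatio_succ_sq_mul_le (hx : 0 < x) :
    gammaHalfRatio (x + 1) ^ 2 * (x + 1 + 1 / 4 + 1 / (32 * (x + 1))) ≤
      gammaHalfRatio x ^ 2 * (x + 1 / 4 + 1 / (32 * x)) := by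
  have hx1 : x + 1 ≠ 0 := by linarith
  have h : gammaHalfRatio x ^ 2 * (x + 1 / 4 + 1 / (32 * x)) -
      gammaHalfRatio (x + 1) ^ 2 * (x + 1 + 1 / 4 + 1 / (32 * (x + 1))) =
      gammaHalfRatio x ^ 2 * (3 * x + 4) / (128 * x * (x + 1) ^ 3) := by
    rw [gammaHalfRatio_add_one (by linarith)]
    field_simp
    ring
  exact sub_nonneg.1 (h ▸ by positivity)

theorem gammaHalfRatio_sq_mul_le_one (hx : 0 < x) :
    gammaHalfRatio x ^ 2 * (x + 1 / 4) ≤ 1 := by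
  let a : ℕ → ℝ := fun k => gammaHalfRatio (x + k) ^ 2 * (x + k + 1 / 4)
  have ha : Monotone a := monotone_nat_of_le_succ fun k => by
    simpa [a, add_assoc] using gammaHalfRatio_sq_mul_le_succ (x := x + k) (by positivity)
  have hlim : Tendsto (fun k : ℕ => (x + k + 1 / 4) / (x + k)) atTop (𝓝 1) := by
    simpa [Function.comp_def] using (tendsto_add_div_add_atTop (1 / 4) 0).comp
      (tendsto_atTop_add_const_left _ x tendsto_natCast_atTop_atTop)
  refine ge_of_tendsto' hlim fun k => ?_
  have hxk : 0 < x + k := by positivity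
  calc gammaHalfRatio x ^ 2 * (x + 1 / 4) = a 0 := by simp [a]
    _ ≤ a k := ha k.zero_le
    _ ≤ (x + k)⁻¹ * (x + k + 1 / 4) :=
        mul_le_mul_of_nonneg_right (gammaHalfRatio_sq_le_inv hxk) (by positivity)
    _ = (x + k + 1 / 4) / (x + k) := inv_mul_eq_div _ _

theorem one_le_gammaHalfRatio_sq_mul (hx : 0 < x) :
    1 ≤ gammaHalfRatio x ^ 2 * (x + 1 / 4 + 1 / (32 * x)) := by
  let b : ℕ → ℝ := fun k => gammaHalfRatio (x + k) ^ 2 * (x + k + 1 / 4 + 1 / (32 * (x + k)))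
  have hb : Antitone b := antitone_nat_of_succ_le fun k => by
    simpa [b, add_assoc] using gammaHalfRatio_succ_sq_mul_le (x := x + k) (by positivity)
  have hlim : Tendsto (fun k : ℕ => (x + k + 1 / 4) / (x + k + 1 / 2)) atTop (𝓝 1) :=
    (tendsto_add_div_add_atTop (1 / 4) (1 / 2)).comp
      (tendsto_atTop_add_const_left _ x tendsto_natCast_atTop_atTop)
  refine le_of_tendsto' hlim fun k => ?_
  have hxk : 0 < x + k := by positivity
  calc (x + k + 1 / 4) / (x + k + 1 / 2) = (x + k + 1 / 2)⁻¹ * (x + k + 1 / 4) :=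
        (inv_mul_eq_div _ _).symm
    _ ≤ gammaHalfRatio (x + k) ^ 2 * (x + k + 1 / 4) := by
        gcongr; exact inv_le_gammaHalfRatio_sq (by positivity)
    _ ≤ b k := mul_le_mul_of_nonneg_left (le_add_of_nonneg_right (by positivity)) (sq_nonneg _)
    _ ≤ b 0 := hb k.zero_le
    _ = gammaHalfRatio x ^ 2 * (x + 1 / 4 + 1 / (32 * x)) := by simp [b]

end gammaHalfRatio

theorem div_succ_eq_gammaHalfRatio_sq (K : ℕ → ℝ)
    (hK : ∀ n : ℕ, K n = 2 ^ (4 * n) *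
      Gamma (((n : ℝ) + 1) / 2) ^ 2 *
      Gamma (((n : ℝ) + 3 / 2) / 2) *
      Gamma (((n : ℝ) + 1 / 2) / 2)) (n : ℕ) :
    K n / K (n + 1) = gammaHalfRatio (n / 2) ^ 2 / (8 * n + 4) := by
  set x : ℝ := n / 2 with hx
  have hKn : K n =
      2 ^ (4 * n) * Gamma (x + 1 / 2) ^ 2 * Gamma (x + 3 / 4) * Gamma (x + 1 / 4) := by
    rw [hK, hx]; ring_nf
  have hKn1 : K (n + 1) =
      2 ^ (4 * n) * 16 * Gamma (x + 1) ^ 2 * Gamma (x + 1 / 4 + 1) * Gamma (x + 3 / 4) := by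
    rw [hK, hx]; push_cast; ring_nf
  have hx₄ : 0 < x + 1 / 4 := by positivity
  rw [hKn, hKn1, Gamma_add_one hx₄.ne', gammaHalfRatio, div_pow,
    show 8 * (n : ℝ) + 4 = 16 * (x + 1 / 4) by rw [hx]; ring, div_div,
    div_eq_div_iff (by positivity) (by positivity)]
  ring

theorem abs_gammaHalfRatio_sq_div_sub_le {m : ℝ} (hm : 0 < m) :
    |gammaHalfRatio (m / 2) ^ 2 / (8 * m + 4) -
        (1 / 4 * m ^ (-2 : ℤ) - 1 / 4 * m ^ (-3 : ℤ))| ≤ m ^ (-4 : ℤ) := by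
  set w := gammaHalfRatio (m / 2) ^ 2
  have hw_le : w ≤ 4 / (2 * m + 1) := by
    have h := gammaHalfRatio_sq_mul_le_one (x := m / 2) (by positivity)
    rw [le_div_iff₀ (by positivity)]
    linarith
  have le_hw : 16 * m / (8 * m ^ 2 + 4 * m + 1) ≤ w := by
    have h := one_le_gammaHalfRatio_sq_mul (x := m / 2) (by positivity)
    rw [div_le_iff₀ (by positivity)]
    field_simp at h
    linarith
  have hmain : 1 / 4 * m ^ (-2 : ℤ) - 1 / 4 * m ^ (-3 : ℤ) = (m - 1) / (4 * m ^ 3) := by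
    simp only [zpow_neg]
    field_simp
  have hupper : 4 / (2 * m + 1) / (8 * m + 4) ≤ (m - 1) / (4 * m ^ 3) + m ^ (-4 : ℤ) := by
    have h : (m - 1) / (4 * m ^ 3) + m ^ (-4 : ℤ) - 4 / (2 * m + 1) / (8 * m + 4) =
        (13 * m ^ 2 + 15 * m + 4) / (4 * m ^ 4 * (2 * m + 1) ^ 2) := by
      simp only [zpow_neg]
      field_simp
      ring
    exact sub_nonneg.1 (h ▸ by positivity)
  have hlower : (m - 1) / (4 * m ^ 3) - m ^ (-4 : ℤ) ≤
      16 * m / (8 * m ^ 2 + 4 * m + 1) / (8 * m + 4) := by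
    have h : 16 * m / (8 * m ^ 2 + 4 * m + 1) / (8 * m + 4) -
        ((m - 1) / (4 * m ^ 3) - m ^ (-4 : ℤ)) = (74 * m ^ 3 + 69 * m ^ 2 + 25 * m + 4) /
          (4 * m ^ 4 * (8 * m ^ 2 + 4 * m + 1) * (2 * m + 1)) := by
      simp only [zpow_neg]
      field_simp
      ring
    exact sub_nonneg.1 (h ▸ by positivity)
  rw [hmain, abs_sub_le_iff, sub_le_iff_le_add', sub_le_comm]
  exact ⟨(div_le_div_of_nonneg_right hw_le (by positivity)).trans hupper,
    hlower.trans (div_le_div_of_nonneg_right le_hw (by positivity))⟩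

theorem stmt_3 (K : ℕ → ℝ)
    (hK : ∀ n : ℕ, K n = 2 ^ (4 * n) *
      Real.Gamma (((n : ℝ) + 1) / 2) ^ 2 *
      Real.Gamma (((n : ℝ) + 3 / 2) / 2) *
      Real.Gamma (((n : ℝ) + 1 / 2) / 2))
    (A : ℕ → ℝ) (hA : ∀ n, A n = K n / K (n + 1)) :
    (fun n : ℕ => A n - ((1 / 4) * (n : ℝ) ^ (-2 : ℤ) - (1 / 4) * (n : ℝ) ^ (-3 : ℤ)))
      =O[Filter.atTop] fun n : ℕ => (n : ℝ) ^ (-4 : ℤ) := by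
  refine IsBigO.of_bound' ?_
  filter_upwards [eventually_gt_atTop 0] with n hn
  have hn' : (0 : ℝ) < n := by exact_mod_cast hn
  rw [hA, div_succ_eq_gammaHalfRatio_sq K hK, norm_eq_abs, norm_of_nonneg (by positivity)]
  exact abs_gammaHalfRatio_sq_div_sub_le hn'
end

section
/- For real y > 1, ∫_0^1 log(y + sqrt(y^2 - t^4)) dt = log(y + sqrt(y^2 - 1)) - 2 + 2 sqrt(y) · ∫_0^{1/sqrt(y)} ds/sqrt(1 - s^4). -/
/-!
Integrate by parts: since `t⁴ = (y - √(y² - t⁴)) (y + √(y² - t⁴))`, the derivative of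
`t ↦ t · log (y + √(y² - t⁴))` is `log (y + √(y² - t⁴)) + 2 - 2y / √(y² - t⁴)`. The remaining
integral `∫₀¹ y / √(y² - t⁴) dt` becomes `√y ∫₀^{1/√y} ds / √(1 - s⁴)` under `t = √y s`.
-/

open Real intervalIntegral

lemma hasDerivAt_mul_log_add_sqrt_sq_sub_pow_four {y t : ℝ} (hy : 0 < y)
    (ht : 0 < y ^ 2 - t ^ 4) :
    HasDerivAt (fun t : ℝ => t * log (y + √(y ^ 2 - t ^ 4)))
      (log (y + √(y ^ 2 - t ^ 4)) + (2 - 2 * y / √(y ^ 2 - t ^ 4))) t := by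
  have hs : 0 < √(y ^ 2 - t ^ 4) := sqrt_pos.mpr ht
  have hys : 0 < y + √(y ^ 2 - t ^ 4) := by positivity
  have hu : HasDerivAt (fun t : ℝ => y ^ 2 - t ^ 4) (-(4 * t ^ 3)) t := by
    simpa using (hasDerivAt_pow 4 t).const_sub (y ^ 2)
  refine ((hasDerivAt_id' t).fun_mul (((hu.sqrt ht.ne').const_add y).log hys.ne')).congr_deriv ?_
  have hsq : √(y ^ 2 - t ^ 4) ^ 2 = y ^ 2 - t ^ 4 := sq_sqrt ht.le
  field_simp
  nlinarith [hsq, hs, hys]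

lemma integral_log_add_sqrt_sq_sub_pow_four {y b : ℝ} (hy : 0 < y) (hb : b ^ 4 < y ^ 2) :
    ∫ t in (0 : ℝ)..b, log (y + √(y ^ 2 - t ^ 4))
      = b * log (y + √(y ^ 2 - b ^ 4)) - 2 * b + 2 * ∫ t in (0 : ℝ)..b, y / √(y ^ 2 - t ^ 4) := by
  have hpos : ∀ t ∈ Set.uIcc (0 : ℝ) b, 0 < y ^ 2 - t ^ 4 := by
    intro t ht
    have habs : |t| ≤ |b| := by simpa using Set.abs_sub_left_of_mem_uIcc ht
    have h4 : t ^ 4 ≤ b ^ 4 := by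
      simpa only [Even.pow_abs (by decide : Even 4)] using pow_le_pow_left₀ (abs_nonneg t) habs 4
    linarith
  have hsqrt : Continuous fun t : ℝ => √(y ^ 2 - t ^ 4) := by fun_prop
  have hadd : Continuous fun t : ℝ => y + √(y ^ 2 - t ^ 4) := by fun_prop
  have hlog : IntervalIntegrable (fun t : ℝ => log (y + √(y ^ 2 - t ^ 4)))
      MeasureTheory.volume 0 b :=
    hadd.continuousOn.log
      (fun t ht => by have := sqrt_pos.mpr (hpos t ht); positivity) |>.intervalIntegrable
  have hdiv : IntervalIntegrable (fun t : ℝ => y / √(y ^ 2 - t ^ 4))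
      MeasureTheory.volume 0 b :=
    continuousOn_const.div hsqrt.continuousOn
      (fun t ht => (sqrt_pos.mpr (hpos t ht)).ne') |>.intervalIntegrable
  have hdiv2 : IntervalIntegrable (fun t : ℝ => 2 * y / √(y ^ 2 - t ^ 4))
      MeasureTheory.volume 0 b := by
    simpa only [mul_div_assoc] using hdiv.const_mul 2
  have hFTC := integral_eq_sub_of_hasDerivAt
    (fun t ht => hasDerivAt_mul_log_add_sqrt_sq_sub_pow_four hy (hpos t ht))
    (hlog.add (intervalIntegrable_const.sub hdiv2))
  rw [integral_add hlog (intervalIntegrable_const.sub hdiv2),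
    integral_sub intervalIntegrable_const hdiv2, integral_const] at hFTC
  simp only [mul_div_assoc, integral_const_mul, sub_zero, zero_mul, smul_eq_mul] at hFTC
  linarith

lemma integral_div_sqrt_sq_sub_pow_four {y : ℝ} (hy : 0 < y) (b : ℝ) :
    ∫ t in (0 : ℝ)..b, y / √(y ^ 2 - t ^ 4)
      = √y * ∫ s in (0 : ℝ)..(b / √y), 1 / √(1 - s ^ 4) := by
  have hsy : 0 < √y := sqrt_pos.mpr hy
  have hscale : ∀ t : ℝ, 1 / √(1 - (t / √y) ^ 4) = y / √(y ^ 2 - t ^ 4) := by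
    intro t
    have h : 1 - (t / √y) ^ 4 = (y ^ 2 - t ^ 4) * (1 / y) ^ 2 := by
      have h4 : √y ^ 4 = y ^ 2 := by rw [show 4 = 2 * 2 by rfl, pow_mul, sq_sqrt hy.le]
      field_simp
      rw [h4]
      ring
    rw [h, sqrt_mul' _ (by positivity), sqrt_sq (by positivity), mul_one_div, one_div_div]
  have h := integral_comp_div (a := 0) (b := b) (fun s : ℝ => 1 / √(1 - s ^ 4)) hsy.ne'
  simp only [hscale, zero_div, smul_eq_mul] at h
  exact h

theorem stmt_6 (y : ℝ) (hy : 1 < y) :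
    ∫ t in (0 : ℝ)..1, Real.log (y + Real.sqrt (y ^ 2 - t ^ 4))
      = Real.log (y + Real.sqrt (y ^ 2 - 1)) - 2 +
        2 * Real.sqrt y * ∫ s in (0 : ℝ)..(1 / Real.sqrt y), 1 / Real.sqrt (1 - s ^ 4) := by
  have hy0 : 0 < y := by linarith
  rw [integral_log_add_sqrt_sq_sub_pow_four hy0 (by nlinarith),
    integral_div_sqrt_sq_sub_pow_four hy0 1]
  rw [one_pow]
  ring
end

section
/- The integral ∫_1^∞ du/(u^{1/4} sqrt(u^2 - u)) equals √π Γ(1/4)/Γ(3/4). -/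
open MeasureTheory Set

lemma beta_aux : ∫ t in (0:ℝ)..1, t ^ (-3/4 : ℝ) * (1 - t) ^ (-1/2 : ℝ)
    = Real.sqrt Real.pi * Real.Gamma (1/4) / Real.Gamma (3/4) := by
  set I : ℝ := ∫ t in (0:ℝ)..1, t ^ (-3/4 : ℝ) * (1 - t) ^ (-1/2 : ℝ) with hI
  have hbeta : Complex.betaIntegral (1/4) (1/2) = (I : ℂ) := by
    rw [Complex.betaIntegral, hI, ← intervalIntegral.integral_ofReal]
    apply intervalIntegral.integral_congr
    intro x hx
    rw [Set.uIcc_of_le (by norm_num : (0:ℝ) ≤ 1)] at hx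
    have hx0 : (0:ℝ) ≤ x := hx.1
    have hx1 : (0:ℝ) ≤ 1 - x := by linarith [hx.2]
    simp only [Complex.ofReal_mul]
    rw [Complex.ofReal_cpow hx0, Complex.ofReal_cpow hx1]
    push_cast
    norm_num
  have h := Complex.Gamma_mul_Gamma_eq_betaIntegral
    (s := 1/4) (t := 1/2) (by norm_num) (by norm_num)
  rw [hbeta] at h
  have h14 : (1/4 : ℂ) = ((1/4 : ℝ) : ℂ) := by norm_num
  have h12 : (1/2 : ℂ) = ((1/2 : ℝ) : ℂ) := by norm_num
  have h34 : ((1/4 : ℝ) : ℂ) + ((1/2 : ℝ) : ℂ) = ((3/4 : ℝ) : ℂ) := by push_cast; norm_num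
  rw [h14, h12, h34, Complex.Gamma_ofReal, Complex.Gamma_ofReal, Complex.Gamma_ofReal,
    ← Complex.ofReal_mul, ← Complex.ofReal_mul] at h
  have hre : Real.Gamma (1/4) * Real.Gamma (1/2) = Real.Gamma (3/4) * I :=
    Complex.ofReal_injective h
  have hG : Real.Gamma (3/4) ≠ 0 := (Real.Gamma_pos_of_pos (by norm_num)).ne'
  rw [Real.Gamma_one_half_eq] at hre
  field_simp
  linarith [hre]

theorem stmt_8 :
    ∫ u in Set.Ioi (1 : ℝ), 1 / (u ^ ((1 : ℝ) / 4) * Real.sqrt (u ^ 2 - u))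
      = Real.sqrt Real.pi * Real.Gamma (1 / 4) / Real.Gamma (3 / 4) := by
  have himg : Set.Ioi (1:ℝ) = (fun t => t⁻¹) '' Set.Ioo 0 1 := by
    ext x
    constructor
    · intro hx
      have hx0 : (0:ℝ) < x := lt_trans one_pos hx
      exact ⟨x⁻¹, ⟨inv_pos.2 hx0, inv_lt_one_of_one_lt₀ hx⟩, inv_inv x⟩
    · rintro ⟨t, ⟨ht0, ht1⟩, rfl⟩
      exact (one_lt_inv₀ ht0).2 ht1
  have hderiv : ∀ t ∈ Set.Ioo (0:ℝ) 1,
      HasDerivWithinAt (fun y : ℝ => y⁻¹) (-(t^2)⁻¹) (Set.Ioo 0 1) t :=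
    fun t ht => (hasDerivAt_inv ht.1.ne').hasDerivWithinAt
  have hinj : Set.InjOn (fun t : ℝ => t⁻¹) (Set.Ioo 0 1) :=
    fun a _ b _ h => inv_injective h
  rw [himg, integral_image_eq_integral_abs_deriv_smul measurableSet_Ioo hderiv hinj]
  rw [show (Real.sqrt Real.pi * Real.Gamma (1 / 4) / Real.Gamma (3 / 4)) =
      ∫ t in (0:ℝ)..1, t ^ (-3/4 : ℝ) * (1 - t) ^ (-1/2 : ℝ) from beta_aux.symm]
  rw [intervalIntegral.integral_of_le (by norm_num : (0:ℝ) ≤ 1),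
    MeasureTheory.integral_Ioc_eq_integral_Ioo]
  apply MeasureTheory.setIntegral_congr_fun measurableSet_Ioo
  intro t ht
  have h1 : (0:ℝ) < t := ht.1
  have h2 : (0:ℝ) < 1 - t := by linarith [ht.2]
  have key : (t^2)⁻¹ * t * t ^ ((1:ℝ)/4) = t ^ (-3/4 : ℝ) := by
    have e3 : ((t:ℝ)^2)⁻¹ = t ^ (-2:ℝ) := by
      rw [← Real.rpow_natCast t 2, ← Real.rpow_neg h1.le]; norm_num
    calc (t^2)⁻¹ * t * t ^ ((1:ℝ)/4) = t ^ (-2:ℝ) * t ^ (1:ℝ) * t ^ ((1:ℝ)/4) := by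
          rw [e3, Real.rpow_one]
      _ = t ^ (-2 + 1 + (1:ℝ)/4) := by rw [← Real.rpow_add h1, ← Real.rpow_add h1]
      _ = t ^ (-3/4 : ℝ) := by norm_num
  have e1 : (t⁻¹) ^ ((1:ℝ)/4) = (t ^ ((1:ℝ)/4))⁻¹ := Real.inv_rpow h1.le _
  have e2 : Real.sqrt ((t⁻¹)^2 - t⁻¹) = t⁻¹ * Real.sqrt (1 - t) := by
    have : (t⁻¹)^2 - t⁻¹ = (t⁻¹)^2 * (1 - t) := by field_simp
    rw [this, Real.sqrt_mul (sq_nonneg _), Real.sqrt_sq (inv_nonneg.2 h1.le)]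
  have hA : (0:ℝ) < t ^ ((1:ℝ)/4) := Real.rpow_pos_of_pos h1 _
  have hB : (0:ℝ) < (1-t) ^ ((1:ℝ)/2) := Real.rpow_pos_of_pos h2 _
  simp only [smul_eq_mul]
  rw [e1, e2, Real.sqrt_eq_rpow, ← key,
    show (-1/2:ℝ) = -(1/2) by norm_num, Real.rpow_neg h2.le]
  rw [abs_neg, abs_inv, abs_of_nonneg (sq_nonneg t)]
  field_simp
end

section
/- The integral ∫_1^∞ du/(u^{1/3} sqrt(u^2 - u)) equals √π Γ(1/3)/Γ(5/6). -/
open MeasureTheory Real Set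

lemma inv_image_Ioo : (fun t : ℝ => t⁻¹) '' Ioo 0 1 = Ioi 1 := by
  ext x
  constructor
  · rintro ⟨t, ⟨ht0, ht1⟩, rfl⟩
    exact one_lt_inv₀ ht0 |>.mpr ht1
  · intro hx
    have hx0 : (0:ℝ) < x := lt_trans one_pos hx
    exact ⟨x⁻¹, ⟨inv_pos.mpr hx0, inv_lt_one_of_one_lt₀ hx⟩, inv_inv x⟩

lemma beta_real : ∫ t in Ioo (0:ℝ) 1, t ^ ((1:ℝ)/3 - 1) * (1 - t) ^ ((1:ℝ)/2 - 1)
    = Real.sqrt Real.pi * Real.Gamma (1/3) / Real.Gamma (5/6) := by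
  have h := Complex.Gamma_mul_Gamma_eq_betaIntegral (s := (1:ℂ)/3) (t := (1:ℂ)/2)
    (by norm_num) (by norm_num)
  have hb : Complex.betaIntegral ((1:ℂ)/3) ((1:ℂ)/2)
      = ((∫ t in Ioo (0:ℝ) 1, t ^ ((1:ℝ)/3 - 1) * (1 - t) ^ ((1:ℝ)/2 - 1) : ℝ) : ℂ) := by
    have key : (∫ x in Ioo (0:ℝ) 1, ((x ^ ((1:ℝ)/3 - 1) * (1 - x) ^ ((1:ℝ)/2 - 1) : ℝ) : ℂ))
        = ((∫ t in Ioo (0:ℝ) 1, t ^ ((1:ℝ)/3 - 1) * (1 - t) ^ ((1:ℝ)/2 - 1) : ℝ) : ℂ) :=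
      integral_ofReal
    rw [Complex.betaIntegral, intervalIntegral.integral_of_le zero_le_one,
      MeasureTheory.integral_Ioc_eq_integral_Ioo, ← key]
    refine setIntegral_congr_fun measurableSet_Ioo (fun x hx => ?_)
    obtain ⟨hx0, hx1⟩ := hx
    rw [show ((1:ℂ)/3 - 1) = ((1/3 - 1 : ℝ) : ℂ) by norm_num,
      show ((1:ℂ)/2 - 1) = ((1/2 - 1 : ℝ) : ℂ) by norm_num,
      show (1 - (x:ℂ)) = ((1 - x : ℝ) : ℂ) by push_cast; ring,
      ← Complex.ofReal_cpow hx0.le, ← Complex.ofReal_cpow (by linarith : (0:ℝ) ≤ 1 - x),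
      ← Complex.ofReal_mul]
  rw [hb] at h
  have h3 : ((1:ℂ)/3) = ((1/3 : ℝ) : ℂ) := by norm_num
  have h2 : ((1:ℂ)/2) = ((1/2 : ℝ) : ℂ) := by norm_num
  rw [h3, h2] at h
  have h56 : ((1/3 : ℝ) : ℂ) + ((1/2 : ℝ) : ℂ) = ((5/6 : ℝ) : ℂ) := by push_cast; norm_num
  rw [h56, Complex.Gamma_ofReal, Complex.Gamma_ofReal, Complex.Gamma_ofReal] at h
  have h' : Real.Gamma (1/3) * Real.Gamma (1/2)
      = Real.Gamma (5/6) * ∫ t in Ioo (0:ℝ) 1, t ^ ((1:ℝ)/3 - 1) * (1 - t) ^ ((1:ℝ)/2 - 1) := by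
    exact_mod_cast h
  have hΓ : (0:ℝ) < Real.Gamma (5/6) := Real.Gamma_pos_of_pos (by norm_num)
  rw [Real.Gamma_one_half_eq] at h'
  field_simp
  linarith [h']

theorem stmt_9 :
    ∫ u in Set.Ioi (1 : ℝ), 1 / (u ^ ((1 : ℝ) / 3) * Real.sqrt (u ^ 2 - u))
      = Real.sqrt Real.pi * Real.Gamma (1 / 3) / Real.Gamma (5 / 6) := by
  rw [← inv_image_Ioo,
    integral_image_eq_integral_abs_deriv_smul measurableSet_Ioo
      (f' := fun t => -(t^2)⁻¹)
      (fun x hx => ((hasDerivAt_inv (ne_of_gt hx.1)).hasDerivWithinAt).congr_deriv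
        (by rw [← Real.rpow_natCast x 2]))
      (fun a ha b hb hab => by
        have := congrArg (·⁻¹) hab; simpa using this)]
  rw [← beta_real]
  refine setIntegral_congr_fun measurableSet_Ioo (fun t ht => ?_)
  obtain ⟨ht0, ht1⟩ := ht
  have ht1' : (0:ℝ) < 1 - t := by linarith
  have ht13 : (0:ℝ) < t ^ ((1:ℝ)/3) := Real.rpow_pos_of_pos ht0 _
  have hs : (0:ℝ) < Real.sqrt (1 - t) := Real.sqrt_pos.mpr ht1'
  have e1 : (t⁻¹) ^ ((1:ℝ)/3) = (t ^ ((1:ℝ)/3))⁻¹ := Real.inv_rpow ht0.le _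
  have e2 : (t⁻¹) ^ (2:ℕ) - t⁻¹ = (1 - t) / t ^ (2:ℕ) := by field_simp
  have e3 : Real.sqrt ((1 - t) / t ^ (2:ℕ)) = Real.sqrt (1 - t) / t := by
    rw [Real.sqrt_div ht1'.le, Real.sqrt_sq ht0.le]
  have e4 : (1 - t) ^ ((1:ℝ)/2 - 1) = (Real.sqrt (1 - t))⁻¹ := by
    rw [show (1:ℝ)/2 - 1 = -(1/2) by norm_num, Real.rpow_neg ht1'.le,
      ← Real.sqrt_eq_rpow]
  have e5 : t ^ ((1:ℝ)/3 - 1) = t ^ ((1:ℝ)/3) / t := by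
    rw [Real.rpow_sub ht0, Real.rpow_one]
  simp only [smul_eq_mul, e1, e2, e3, e4, e5]
  rw [abs_of_nonpos (neg_nonpos.mpr (by positivity))]
  field_simp
end

section
/- Let Q_n be the birth-death polynomials with rates λ_n = (4n+1)(4n+2)^2(4n+3), μ_n = (4n-1)(4n)^2(4n+1), defined by Q_0 = 1, Q_1(x) = (λ_0 + μ_0 - x)/λ_0, and -x Q_n(x) = λ_n Q_{n+1}(x) + μ_n Q_{n-1}(x) - (λ_n + μ_n)Q_n(x) for n ≥ 1. Then every zero of Q_n (n ≥ 1) lies in the open interval (4.29, 2^{10} n^4 - 2^{10} n^3 + 35·2^6 n^2). -/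
/-!
Write the recurrence as `λₖ Qₖ₊₁ = (λₖ + μₖ - x) Qₖ - μₖ Qₖ₋₁`. If `Qₖ > 0` and `Qₖ₊₁ ≥ rₖ Qₖ`
with `rₖ > 0`, then `λₖ₊₁ Qₖ₊₂ ≥ (λₖ₊₁ + μₖ₊₁ - x - μₖ₊₁ / rₖ) Qₖ₊₁`, so the ratio bound propagates
as soon as `λₖ₊₁ rₖ₊₁ + μₖ₊₁ / rₖ ≤ λₖ₊₁ + μₖ₊₁ - x`; in particular no `Qₖ` vanishes.

For small `x` take `rₖ = (2k+1)/(2k+2)`: the condition becomes `x ≤ λₖ₊₁/(2k+4) - μₖ₊₁/(2k+1)`,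
and for the quartic rates the right-hand side stays above `4.29`.
For large `x` apply the same argument to `(-1)ᵏ Qₖ`, which satisfies the recurrence with `λₖ + μₖ - x`
replaced by `x - λₖ - μₖ`, with `rₖ = 1`: the condition becomes `2 (λₖ + μₖ) ≤ x` for `k < n`.
-/

theorem mul_le_of_three_term {l m A a b c r s : ℝ} (hl : 0 < l) (hm : 0 ≤ m) (hr : 0 < r)
    (hb : 0 ≤ b) (hab : r * a ≤ b) (hA : l * s + m / r ≤ A) (hc : l * c = A * b - m * a) :
    s * b ≤ c := by
  have hma : m * a ≤ m / r * b := by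
    rw [div_mul_eq_mul_div, le_div_iff₀ hr]
    nlinarith
  have : l * (s * b) ≤ l * c := by nlinarith
  exact le_of_mul_le_mul_left this hl

section RatioChain

variable {l m A q r : ℕ → ℝ} {N : ℕ}
  (hl : ∀ k, 0 < l (k + 1)) (hm : ∀ k, 0 ≤ m (k + 1)) (hr : ∀ k, 0 < r k)
  (hrec : ∀ k, l (k + 1) * q (k + 2) = A (k + 1) * q (k + 1) - m (k + 1) * q k)
  (hA : ∀ k, k + 1 ≤ N → l (k + 1) * r (k + 1) + m (k + 1) / r k ≤ A (k + 1))
  (h0 : 0 < q 0) (h1 : r 0 * q 0 ≤ q 1)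
include hl hm hr hrec hA h0 h1

theorem three_term_ratio_chain : ∀ k ≤ N, 0 < q k ∧ r k * q k ≤ q (k + 1) := by
  intro k
  induction k with
  | zero => exact fun _ => ⟨h0, h1⟩
  | succ k ih =>
    intro hk
    obtain ⟨hqk, hratio⟩ := ih (by omega)
    have hqk1 : 0 < q (k + 1) := (mul_pos (hr k) hqk).trans_le hratio
    exact ⟨hqk1, mul_le_of_three_term (hl k) (hm k) (hr k) hqk1.le hratio (hA k hk) (hrec k)⟩

theorem pos_of_three_term_ratio_chain : ∀ k ≤ N + 1, 0 < q k := by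
  intro k hk
  rcases Nat.lt_or_eq_of_le hk with hk | rfl
  · exact (three_term_ratio_chain hl hm hr hrec hA h0 h1 k (by omega)).1
  · obtain ⟨hqN, hratio⟩ := three_term_ratio_chain hl hm hr hrec hA h0 h1 N le_rfl
    exact (mul_pos (hr N) hqN).trans_le hratio

end RatioChain

theorem neg_one_pow_mul_three_term {l m x a b c : ℝ} (k : ℕ)
    (h : l * c = (l + m - x) * b - m * a) :
    l * ((-1) ^ (k + 2) * c) = (x - l - m) * ((-1) ^ (k + 1) * b) - m * ((-1) ^ k * a) := by
  rw [pow_succ, pow_succ]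
  linear_combination (-1) ^ k * h

def bergValentBirth (n : ℕ) : ℝ := (4 * (n : ℝ) + 1) * (4 * (n : ℝ) + 2) ^ 2 * (4 * (n : ℝ) + 3)

def bergValentDeath (n : ℕ) : ℝ := (4 * (n : ℝ) - 1) * (4 * (n : ℝ)) ^ 2 * (4 * (n : ℝ) + 1)

noncomputable def bergValentRatio (k : ℕ) : ℝ := (2 * (k : ℝ) + 1) / (2 * (k : ℝ) + 2)

theorem bergValentRatio_pos (k : ℕ) : 0 < bergValentRatio k := by
  unfold bergValentRatio
  positivity

theorem bergValentBirth_pos (n : ℕ) : 0 < bergValentBirth n := by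
  unfold bergValentBirth
  positivity

theorem bergValentDeath_succ_nonneg (n : ℕ) : 0 ≤ bergValentDeath (n + 1) := by
  rw [bergValentDeath, Nat.cast_succ, show 4 * ((n : ℝ) + 1) - 1 = 4 * n + 3 by ring]
  positivity

theorem four_point_two_nine_le_bergValent_gap (k : ℕ) :
    (4.29 : ℝ) ≤ bergValentBirth (k + 1) / (2 * k + 4) - bergValentDeath (k + 1) / (2 * k + 1) := by
  have hk : (0 : ℝ) ≤ k := k.cast_nonneg
  rw [le_sub_iff_add_le, le_div_iff₀ (by positivity), add_mul, div_mul_eq_mul_div,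
    ← le_sub_iff_add_le', div_le_iff₀ (by positivity), bergValentBirth, bergValentDeath]
  push_cast
  nlinarith [pow_nonneg hk 2, pow_nonneg hk 3, pow_nonneg hk 4]

theorem bergValent_ratio_condition (k : ℕ) {x : ℝ} (hx : x ≤ 4.29) :
    bergValentBirth (k + 1) * bergValentRatio (k + 1) + bergValentDeath (k + 1) / bergValentRatio k
      ≤ bergValentBirth (k + 1) + bergValentDeath (k + 1) - x := by
  have hk : (0 : ℝ) ≤ k := k.cast_nonneg
  have hgap : bergValentBirth (k + 1) + bergValentDeath (k + 1)
        - (bergValentBirth (k + 1) * bergValentRatio (k + 1)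
          + bergValentDeath (k + 1) / bergValentRatio k)
      = bergValentBirth (k + 1) / (2 * k + 4) - bergValentDeath (k + 1) / (2 * k + 1) := by
    unfold bergValentRatio
    push_cast
    field_simp
    ring
  linarith [four_point_two_nine_le_bergValent_gap k]

theorem two_mul_bergValent_rates_le {j n : ℕ} (h : j < n) :
    2 * (bergValentBirth j + bergValentDeath j)
      ≤ 2 ^ 10 * (n : ℝ) ^ 4 - 2 ^ 10 * (n : ℝ) ^ 3 + 35 * 2 ^ 6 * (n : ℝ) ^ 2 := by
  obtain ⟨d, rfl⟩ := Nat.exists_eq_add_of_lt h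
  have hj : (0 : ℝ) ≤ j := j.cast_nonneg
  have hd : (0 : ℝ) ≤ d := d.cast_nonneg
  rw [bergValentBirth, bergValentDeath]
  push_cast
  nlinarith [pow_nonneg hj 2, pow_nonneg hj 3, pow_nonneg hj 4, pow_nonneg hd 2, pow_nonneg hd 3,
    pow_nonneg hd 4, mul_nonneg hj hd, mul_nonneg (mul_nonneg hj hd) hd,
    mul_nonneg (mul_nonneg hj hj) hd, mul_nonneg (mul_nonneg hj hd) (mul_nonneg hj hd),
    mul_nonneg (pow_nonneg hj 3) hd, mul_nonneg (pow_nonneg hd 3) hj]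

theorem stmt_10 (lam mu : ℕ → ℝ)
    (hlam : ∀ n : ℕ, lam n = (4 * (n : ℝ) + 1) * (4 * (n : ℝ) + 2) ^ 2 * (4 * (n : ℝ) + 3))
    (hmu : ∀ n : ℕ, mu n = (4 * (n : ℝ) - 1) * (4 * (n : ℝ)) ^ 2 * (4 * (n : ℝ) + 1))
    (Q : ℕ → ℝ → ℝ)
    (h0 : ∀ x, Q 0 x = 1)
    (h1 : ∀ x, Q 1 x = (lam 0 + mu 0 - x) / lam 0)
    (hrec : ∀ n : ℕ, 1 ≤ n → ∀ x : ℝ,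
      -x * Q n x = lam n * Q (n + 1) x + mu n * Q (n - 1) x - (lam n + mu n) * Q n x)
    (n : ℕ) (hn : 1 ≤ n) (x : ℝ) (hx : Q n x = 0) :
    (4.29 : ℝ) < x ∧
      x < 2 ^ 10 * (n : ℝ) ^ 4 - 2 ^ 10 * (n : ℝ) ^ 3 + 35 * 2 ^ 6 * (n : ℝ) ^ 2 := by
  obtain rfl : lam = bergValentBirth := funext hlam
  obtain rfl : mu = bergValentDeath := funext hmu
  have hQ1 : Q 1 x = (12 - x) / 12 := by
    rw [h1]; norm_num [bergValentBirth, bergValentDeath]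
  have hrec' (k : ℕ) : bergValentBirth (k + 1) * Q (k + 2) x
      = (bergValentBirth (k + 1) + bergValentDeath (k + 1) - x) * Q (k + 1) x
        - bergValentDeath (k + 1) * Q k x := by
    have h := hrec (k + 1) k.succ_pos x
    rw [Nat.add_sub_cancel] at h
    linarith
  constructor
  · by_contra! hlow
    have hpos := pos_of_three_term_ratio_chain (N := n) (q := (Q · x)) (r := bergValentRatio)
      (A := fun k => bergValentBirth k + bergValentDeath k - x)
      (fun _ => bergValentBirth_pos _) bergValentDeath_succ_nonneg
      bergValentRatio_pos hrec'
      (fun k _ => bergValent_ratio_condition k hlow) (by simp [h0])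
      (by norm_num [h0, hQ1, bergValentRatio]; linarith) n (by omega)
    exact hpos.ne' hx
  · by_contra! hup
    have hgap (j : ℕ) (hj : j < n) : 2 * (bergValentBirth j + bergValentDeath j) ≤ x :=
      (two_mul_bergValent_rates_le hj).trans hup
    have hbase : 1 * ((-1) ^ 0 * Q 0 x) ≤ (-1) ^ 1 * Q 1 x := by
      have h24 := hgap 0 hn
      norm_num [h0, hQ1, bergValentBirth, bergValentDeath] at h24 ⊢
      linarith
    have hpos := pos_of_three_term_ratio_chain (N := n - 1) (q := fun k => (-1) ^ k * Q k x)
      (r := fun _ => 1) (A := fun k => x - bergValentBirth k - bergValentDeath k)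
      (fun _ => bergValentBirth_pos _) bergValentDeath_succ_nonneg
      (fun _ => one_pos) (fun k => neg_one_pow_mul_three_term k (hrec' k))
      (fun k hk => by linarith [hgap (k + 1) (by omega)]) (by simp [h0])
      hbase n (by omega)
    simp [hx] at hpos
end

section
/- For the Berg–Valent rates λ_k = (4k+1)(4k+2)^2(4k+3), the product satisfies ∏_{k=0}^{n-1} λ_k = 2^{8n} Γ(1/4+n) Γ(1/2+n)^2 Γ(3/4+n) / (Γ(1/4) Γ(1/2)^2 Γ(3/4)), and asymptotically ∏_{k=0}^{n-1} λ_k ~ 2^{8n} · 2√2 · (n/e)^{4n} as n → ∞. -/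
/-!
Since `λ_k = 2^8 (k + 1/4) (k + 1/2)^2 (k + 3/4)`, the product formula is the functional
equation `Γ(a + n) = Γ(a) · a (a + 1) ⋯ (a + n - 1)` applied three times. For the asymptotics,
`λ_k` is also `(4k+1)(4k+2)(4k+3)(4k+4) · (2k+1)(2k+2) / (4 (k+1)^2)`, so the product is
`(4n)! (2n)! / (4^n (n!)^2)`, and Stirling's formula for the three factorials gives the claim.
-/

open Filter Asymptotics Finset Real Nat

theorem Real.Gamma_add_nat_eq_mul_prod {a : ℝ} (ha : ∀ k : ℕ, a + k ≠ 0) (n : ℕ) :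
    Gamma (a + n) = Gamma a * ∏ k ∈ range n, (a + k) := by
  induction n with
  | zero => simp
  | succ n ih =>
    rw [Nat.cast_succ, ← add_assoc, Gamma_add_one (ha n), ih, prod_range_succ]
    ring

def bergValentRate (x : ℝ) : ℝ := (4 * x + 1) * (4 * x + 2) ^ 2 * (4 * x + 3)

theorem bergValentRate_eq_two_pow_mul (x : ℝ) :
    bergValentRate x = 2 ^ 8 * ((1 / 4 + x) * (1 / 2 + x) ^ 2 * (3 / 4 + x)) := by
  unfold bergValentRate
  ring

theorem prod_bergValentRate_eq_Gamma (n : ℕ) :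
    ∏ k ∈ range n, bergValentRate k
      = 2 ^ (8 * n) * Gamma (1 / 4 + n) * Gamma (1 / 2 + n) ^ 2 * Gamma (3 / 4 + n) /
        (Gamma (1 / 4) * Gamma (1 / 2) ^ 2 * Gamma (3 / 4)) := by
  have h1 : Gamma (1 / 4) ≠ 0 := (Gamma_pos_of_pos (by norm_num)).ne'
  have h2 : Gamma (1 / 2) ≠ 0 := (Gamma_pos_of_pos (by norm_num)).ne'
  have h3 : Gamma (3 / 4) ≠ 0 := (Gamma_pos_of_pos (by norm_num)).ne'
  rw [Gamma_add_nat_eq_mul_prod (fun k => by positivity),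
    Gamma_add_nat_eq_mul_prod (fun k => by positivity),
    Gamma_add_nat_eq_mul_prod (fun k => by positivity)]
  simp only [bergValentRate_eq_two_pow_mul, prod_mul_distrib, prod_pow, prod_const, card_range,
    ← pow_mul]
  field_simp
  ring

theorem prod_bergValent_mul_four_pow_mul_factorial_sq (n : ℕ) :
    (∏ k ∈ range n, ((4 * k + 1) * (4 * k + 2) ^ 2 * (4 * k + 3))) * (4 ^ n * n ! ^ 2)
      = (4 * n)! * (2 * n)! := by
  induction n with
  | zero => simp
  | succ n ih =>
    have h4 : (4 * (n + 1))!
        = (4 * n)! * ((4 * n + 1) * (4 * n + 2) * (4 * n + 3) * (4 * n + 4)) := by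
      rw [show 4 * (n + 1) = 4 * n + 1 + 1 + 1 + 1 by ring]
      simp only [Nat.factorial_succ]
      ring
    have h2 : (2 * (n + 1))! = (2 * n)! * ((2 * n + 1) * (2 * n + 2)) := by
      rw [show 2 * (n + 1) = 2 * n + 1 + 1 by ring]
      simp only [Nat.factorial_succ]
      ring
    rw [prod_range_succ, h4, h2, Nat.factorial_succ]
    linear_combination
      ((4 * n + 1) * (4 * n + 2) * (4 * n + 3) * (4 * n + 4) * ((2 * n + 1) * (2 * n + 2))) * ih

theorem prod_bergValentRate_eq_factorial (n : ℕ) :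
    ∏ k ∈ range n, bergValentRate k = (4 * n)! * (2 * n)! / (4 ^ n * n ! ^ 2) := by
  rw [eq_div_iff (by positivity)]
  unfold bergValentRate
  exact_mod_cast prod_bergValent_mul_four_pow_mul_factorial_sq n

theorem stirling_approx_ratio_eq {n : ℕ} (hn : n ≠ 0) :
    √(2 * (4 * n : ℕ) * π) * ((4 * n : ℕ) / exp 1) ^ (4 * n) *
        (√(2 * (2 * n : ℕ) * π) * ((2 * n : ℕ) / exp 1) ^ (2 * n)) /
        (4 ^ n * (√(2 * n * π) * (n / exp 1) ^ n) ^ 2)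
      = 2 ^ (8 * n) * (2 * √2) * (n / exp 1) ^ (4 * n) := by
  set t := √(2 * n * π) with ht
  set q := (n : ℝ) / exp 1
  have htpos : 0 < t := by positivity
  have h4 : √(2 * (4 * n : ℕ) * π) = 2 * t := by
    rw [ht, ← sqrt_sq (zero_le_two : (0 : ℝ) ≤ 2), ← sqrt_mul (by norm_num)]
    congr 1; push_cast; ring
  have h2 : √(2 * (2 * n : ℕ) * π) = √2 * t := by
    rw [ht, ← sqrt_mul zero_le_two]
    congr 1; push_cast; ring
  have hfour : ∀ m : ℕ, (4 : ℝ) ^ m = 2 ^ (2 * m) := fun m => by rw [pow_mul]; norm_num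
  have hq4 : (((4 * n : ℕ) : ℝ) / exp 1) ^ (4 * n) = 2 ^ (8 * n) * q ^ (4 * n) := by
    rw [show ((4 * n : ℕ) : ℝ) / exp 1 = 4 * q by push_cast; ring, mul_pow, hfour]
    ring
  have hq2 : ((2 * n : ℕ) : ℝ) / exp 1 = 2 * q := by push_cast; ring
  have hqpos : 0 < q := by positivity
  rw [h4, h2, hq4, hq2, hfour]
  field_simp
  ring

theorem factorial_ratio_isEquivalent :
    (fun n : ℕ => ((4 * n)! * (2 * n)! / (4 ^ n * n ! ^ 2) : ℝ))
      ~[atTop] fun n => 2 ^ (8 * n) * (2 * √2) * (n / exp 1) ^ (4 * n) := by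
  have hfac := Stirling.factorial_isEquivalent_stirling
  refine (((hfac.comp_tendsto (tendsto_id.const_mul_atTop' four_pos)).mul
    (hfac.comp_tendsto (tendsto_id.const_mul_atTop' two_pos))).div
    ((IsEquivalent.refl (u := fun n : ℕ => (4 : ℝ) ^ n)).mul (hfac.pow 2))).congr_right ?_
  filter_upwards [eventually_ne_atTop 0] with n hn
  exact stirling_approx_ratio_eq hn

theorem stmt_16 (lam : ℕ → ℝ)
    (hlam : ∀ k : ℕ, lam k = (4 * (k : ℝ) + 1) * (4 * (k : ℝ) + 2) ^ 2 * (4 * (k : ℝ) + 3)) :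
    (∀ n : ℕ, ∏ k ∈ Finset.range n, lam k
      = 2 ^ (8 * n) * Real.Gamma (1 / 4 + n) * Real.Gamma (1 / 2 + n) ^ 2 *
          Real.Gamma (3 / 4 + n) /
        (Real.Gamma (1 / 4) * Real.Gamma (1 / 2) ^ 2 * Real.Gamma (3 / 4))) ∧
    Filter.Tendsto
      (fun n : ℕ => (∏ k ∈ Finset.range n, lam k) /
        (2 ^ (8 * n) * (2 * Real.sqrt 2) * ((n : ℝ) / Real.exp 1) ^ (4 * n)))
      Filter.atTop (nhds 1) := by
  have hrate : lam = fun k : ℕ => bergValentRate k := funext hlam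
  subst hrate
  refine ⟨prod_bergValentRate_eq_Gamma, ?_⟩
  simp only [prod_bergValentRate_eq_factorial]
  refine (isEquivalent_iff_tendsto_one ?_).mp factorial_ratio_isEquivalent
  filter_upwards [eventually_ne_atTop 0] with n hn
  positivity
end

section
/- Zero-localization via approximation (Hethcote): Suppose on [a - ρ, a + ρ] we have f(t) = g(t) + ε(t), where f is continuous, g is differentiable, g(a) = 0, m = min_{t ∈ [a-ρ,a+ρ]} |g'(t)| > 0, and E = max|ε(t)| < min(|g(a-ρ)|, |g(a+ρ)|). Then there exists a zero c of f in [a - ρ, a + ρ] with |c - a| ≤ E/m. -/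
open Set

/-- Helper: if `g` is strictly monotone on the interval, vanishes at `a`, and `f` is
uniformly `E`-close to `g` with `E` smaller than `|g|` at the endpoints, then `f` has
a zero `c` in the interval with `|g c| ≤ E`. -/
lemma stmt_18_aux (a ρ E : ℝ) (hρ : 0 < ρ) (f g : ℝ → ℝ)
    (hf : ContinuousOn f (Set.Icc (a - ρ) (a + ρ)))
    (hga : g a = 0)
    (hmono : StrictMonoOn g (Set.Icc (a - ρ) (a + ρ)))
    (hclose : ∀ t ∈ Set.Icc (a - ρ) (a + ρ), |f t - g t| ≤ E)
    (hE' : E < min |g (a - ρ)| |g (a + ρ)|) :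
    ∃ c ∈ Set.Icc (a - ρ) (a + ρ), f c = 0 ∧ |g c| ≤ E := by
  have hmem₁ : a - ρ ∈ Set.Icc (a - ρ) (a + ρ) := by constructor <;> linarith
  have hmem₂ : a + ρ ∈ Set.Icc (a - ρ) (a + ρ) := by constructor <;> linarith
  have hmema : a ∈ Set.Icc (a - ρ) (a + ρ) := by constructor <;> linarith
  have hglt : g (a - ρ) < 0 := hga ▸ hmono hmem₁ hmema (by linarith)
  have hggt : 0 < g (a + ρ) := hga ▸ hmono hmema hmem₂ (by linarith)
  have h1 : f (a - ρ) < 0 := by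
    have hb := (abs_le.1 (hclose _ hmem₁)).2
    have habs : |g (a - ρ)| = -(g (a - ρ)) := abs_of_neg hglt
    have hEb : E < |g (a - ρ)| := lt_of_lt_of_le hE' (min_le_left _ _)
    linarith
  have h2 : 0 < f (a + ρ) := by
    have hb := (abs_le.1 (hclose _ hmem₂)).1
    have habs : |g (a + ρ)| = g (a + ρ) := abs_of_pos hggt
    have hEb : E < |g (a + ρ)| := lt_of_lt_of_le hE' (min_le_right _ _)
    linarith
  have hsub : Set.Icc (a - ρ) (a + ρ) ⊆ Set.Icc (a - ρ) (a + ρ) := subset_rfl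
  have := intermediate_value_Icc (by linarith : a - ρ ≤ a + ρ) hf
  have h0 : (0:ℝ) ∈ Set.Icc (f (a - ρ)) (f (a + ρ)) := ⟨le_of_lt h1, le_of_lt h2⟩
  obtain ⟨c, hc, hfc⟩ := this h0
  refine ⟨c, hc, hfc, ?_⟩
  have := hclose c hc
  rw [hfc] at this
  rwa [abs_sub_comm, sub_zero] at this

/-- Hethcote's zero-localization lemma. -/
theorem stmt_18 (a ρ m E : ℝ) (hρ : 0 < ρ) (f g ε : ℝ → ℝ)
    (hfg : ∀ t ∈ Set.Icc (a - ρ) (a + ρ), f t = g t + ε t)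
    (hf : ContinuousOn f (Set.Icc (a - ρ) (a + ρ)))
    (hgdiff : ∀ t ∈ Set.Icc (a - ρ) (a + ρ), DifferentiableAt ℝ g t)
    (hga : g a = 0)
    (hm : 0 < m)
    (hm' : ∀ t ∈ Set.Icc (a - ρ) (a + ρ), m ≤ |deriv g t|)
    (hE : ∀ t ∈ Set.Icc (a - ρ) (a + ρ), |ε t| ≤ E)
    (hE' : E < min |g (a - ρ)| |g (a + ρ)|) :
    ∃ c ∈ Set.Icc (a - ρ) (a + ρ), f c = 0 ∧ |c - a| ≤ E / m := by
  set I := Set.Icc (a - ρ) (a + ρ) with hI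
  have hmema : a ∈ I := by constructor <;> linarith
  have hgc : ContinuousOn g I := fun t ht =>
    (hgdiff t ht).continuousAt.continuousWithinAt
  have hclose : ∀ t ∈ I, |f t - g t| ≤ E := by
    intro t ht
    rw [hfg t ht]
    simpa using hE t ht
  -- slope bound from MVT
  have hbound : ∀ c ∈ I, m * |c - a| ≤ |g c| := by
    intro c hc
    rcases lt_trichotomy c a with hlt | heq | hgt
    · have hsub : Set.Icc c a ⊆ I := Set.Icc_subset_Icc hc.1 hmema.2
      obtain ⟨ξ, hξ, hder⟩ := exists_deriv_eq_slope g hlt (hgc.mono hsub)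
        (fun x hx => (hgdiff x (hsub (Set.Ioo_subset_Icc_self hx))).differentiableWithinAt)
      have hξI : ξ ∈ I := hsub (Set.Ioo_subset_Icc_self hξ)
      have := hm' ξ hξI
      rw [hder, hga] at this
      rw [abs_div] at this
      have hpos : 0 < a - c := by linarith
      rw [abs_of_pos hpos] at this
      have : m * (a - c) ≤ |0 - g c| := by
        rw [le_div_iff₀ hpos] at this; linarith [this]
      rw [zero_sub, abs_neg] at this
      rwa [abs_of_neg (by linarith : c - a < 0), neg_sub]
    · simp [heq, hga]
    · have hsub : Set.Icc a c ⊆ I := Set.Icc_subset_Icc hmema.1 hc.2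
      obtain ⟨ξ, hξ, hder⟩ := exists_deriv_eq_slope g hgt (hgc.mono hsub)
        (fun x hx => (hgdiff x (hsub (Set.Ioo_subset_Icc_self hx))).differentiableWithinAt)
      have hξI : ξ ∈ I := hsub (Set.Ioo_subset_Icc_self hξ)
      have := hm' ξ hξI
      rw [hder, hga] at this
      rw [abs_div] at this
      have hpos : 0 < c - a := by linarith
      rw [abs_of_pos hpos] at this
      have : m * (c - a) ≤ |g c - 0| := by
        rw [le_div_iff₀ hpos] at this; linarith [this]
      rw [sub_zero] at this
      rwa [abs_of_pos hpos]
  -- Darboux: deriv g has constant sign on I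
  have hconv : Convex ℝ I := convex_Icc _ _
  have hOC : OrdConnected (deriv g '' I) :=
    (ordConnected_Icc).image_deriv hgdiff
  have h0notin : (0:ℝ) ∉ deriv g '' I := by
    rintro ⟨t, ht, htz⟩
    have := hm' t ht
    rw [htz] at this
    simp at this
    linarith
  have hinterior : interior I ⊆ I := interior_subset
  have hne0 : deriv g a ≠ 0 := fun h => h0notin ⟨a, hmema, h⟩
  rcases hne0.lt_or_gt.symm with hda | hda
  · -- positive case: all derivs positive
    have hpos : ∀ t ∈ interior I, 0 < deriv g t := by
      intro t ht
      have htI := hinterior ht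
      by_contra hle
      push_neg at hle
      have hne : deriv g t ≠ 0 := fun h => h0notin ⟨t, htI, h⟩
      have hlt : deriv g t < 0 := lt_of_le_of_ne hle hne
      have : (0:ℝ) ∈ Set.Icc (deriv g t) (deriv g a) := ⟨le_of_lt hlt, le_of_lt hda⟩
      exact h0notin (hOC.out ⟨t, htI, rfl⟩ ⟨a, hmema, rfl⟩ this)
    have hmono : StrictMonoOn g I := strictMonoOn_of_deriv_pos hconv hgc hpos
    obtain ⟨c, hc, hfc, hgcE⟩ := stmt_18_aux a ρ E hρ f g hf hga hmono hclose hE'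
    refine ⟨c, hc, hfc, ?_⟩
    exact (le_div_iff₀' hm).2 (le_trans (hbound c hc) hgcE)
  · -- deriv g a < 0 : all derivs negative, apply aux to -f, -g
    have hneg : ∀ t ∈ interior I, deriv g t < 0 := by
      intro t ht
      have htI := hinterior ht
      by_contra hle
      push_neg at hle
      have hne : deriv g t ≠ 0 := fun h => h0notin ⟨t, htI, h⟩
      have hlt : 0 < deriv g t := lt_of_le_of_ne hle (Ne.symm hne)
      have : (0:ℝ) ∈ Set.Icc (deriv g a) (deriv g t) := ⟨le_of_lt hda, le_of_lt hlt⟩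
      exact h0notin (hOC.out ⟨a, hmema, rfl⟩ ⟨t, htI, rfl⟩ this)
    have hanti : StrictAntiOn g I := strictAntiOn_of_deriv_neg hconv hgc hneg
    have hmono : StrictMonoOn (fun t => -g t) I := fun x hx y hy hxy =>
      neg_lt_neg (hanti hx hy hxy)
    have hfc' : ContinuousOn (fun t => -f t) I := hf.neg
    have hclose' : ∀ t ∈ I, |(fun t => -f t) t - (fun t => -g t) t| ≤ E := by
      intro t ht
      simpa [abs_sub_comm, neg_sub, ← neg_add', abs_neg, neg_add_eq_sub] using hclose t ht
    have hE'' : E < min |(fun t => -g t) (a - ρ)| |(fun t => -g t) (a + ρ)| := by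
      simpa [abs_neg] using hE'
    obtain ⟨c, hc, hfc, hgcE⟩ := stmt_18_aux a ρ E hρ (fun t => -f t) (fun t => -g t)
      hfc' (by simp [hga]) hmono hclose' hE''
    simp only [abs_neg, neg_eq_zero] at hfc hgcE
    refine ⟨c, hc, hfc, ?_⟩
    exact (le_div_iff₀' hm).2 (le_trans (hbound c hc) hgcE)
end

section
/- Let ν = n + 1/4, and define U(t) near t = 2^{10} implicitly for 0 < t < 2^{10} by (2/3)(-U(t))^{3/2} = arccos((t - 2^9)/2^9) - (√2 t^{1/4}/8) B_{1 - t/2^{10}}(1/2, 1/4). Then U(t) = (t - 2^{10})/(2^{10}·4^{1/3}) + O((t - 2^{10})^2) as t → 2^{10}. -/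
/-!
Write `phase t` for the right-hand side of the implicit relation. The derivative of the arccos term
cancels exactly against the derivative of the incomplete Beta function, leaving
`phase'(t) = -(√2/32) t^{-3/4} B_{1-t/2^10}(1/2, 1/4)`. Since `B_x(1/2, 1/4) ~ 2√x` as `x → 0⁺`,
L'Hôpital's rule gives `phase t ~ (1024 - t)^{3/2} / 98304` as `t → 1024⁻`. Hence
`(-U(t) / (1024 - t))^{3/2} → 1/65536`, which forces `U(1024) = 0` and
`U'(1024) = 65536^{-2/3} = 1/(2^10 · 4^{1/3})`; analyticity turns this into the first-order
Taylor expansion.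
-/

open Real Filter Topology Set MeasureTheory Asymptotics intervalIntegral

noncomputable def incBeta (x a b : ℝ) : ℝ := ∫ y in (0 : ℝ)..x, y ^ (a - 1) * (1 - y) ^ (b - 1)

namespace incBeta

variable {a b x y : ℝ}

lemma rpow_le_integrand (hb : b ≤ 1) (hy : y ∈ Icc 0 x) (hx : x < 1) :
    y ^ (a - 1) ≤ y ^ (a - 1) * (1 - y) ^ (b - 1) :=
  le_mul_of_one_le_right (rpow_nonneg hy.1 _)
    (one_le_rpow_of_pos_of_le_one_of_nonpos (by linarith [hy.2]) (by linarith [hy.1])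
      (by linarith))

lemma integrand_le (hb : b ≤ 1) (hy : y ∈ Icc 0 x) (hx : x < 1) :
    y ^ (a - 1) * (1 - y) ^ (b - 1) ≤ (1 - x) ^ (b - 1) * y ^ (a - 1) := by
  rw [mul_comm]
  exact mul_le_mul_of_nonneg_right
    (rpow_le_rpow_of_nonpos (by linarith) (by linarith [hy.2]) (by linarith))
    (rpow_nonneg hy.1 _)

lemma continuousOn_integrand :
    ContinuousOn (fun y : ℝ => y ^ (a - 1) * (1 - y) ^ (b - 1)) (Ioo 0 1) := fun _ hy =>
  ((continuousAt_id.rpow_const (Or.inl hy.1.ne')).mul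
    ((continuousAt_const.sub continuousAt_id).rpow_const
      (Or.inl (sub_ne_zero.2 hy.2.ne')))).continuousWithinAt

lemma intervalIntegrable_integrand (ha : 0 < a) (hb : b ≤ 1) (hx0 : 0 ≤ x) (hx1 : x < 1) :
    IntervalIntegrable (fun y : ℝ => y ^ (a - 1) * (1 - y) ^ (b - 1)) volume 0 x := by
  have hdom : IntervalIntegrable (fun y : ℝ => (1 - x) ^ (b - 1) * y ^ (a - 1)) volume 0 x :=
    (intervalIntegrable_rpow' (r := a - 1) (by linarith)).const_mul _
  refine hdom.mono_fun ?_ ?_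
  · rw [uIoc_of_le hx0]
    exact (continuousOn_integrand.mono fun y hy => ⟨hy.1, hy.2.trans_lt hx1⟩)
      |>.aestronglyMeasurable measurableSet_Ioc
  · rw [EventuallyLE, ae_restrict_iff' measurableSet_uIoc]
    refine Eventually.of_forall fun y hy => ?_
    rw [uIoc_of_le hx0] at hy
    have hy' : y ∈ Icc 0 x := ⟨hy.1.le, hy.2⟩
    have h0 : 0 ≤ y ^ (a - 1) * (1 - y) ^ (b - 1) :=
      mul_nonneg (rpow_nonneg hy'.1 _) (rpow_nonneg (by linarith [hy.2]) _)
    rw [Real.norm_of_nonneg h0, Real.norm_of_nonneg (h0.trans (integrand_le hb hy' hx1))]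
    exact integrand_le hb hy' hx1

lemma integral_rpow_sub_one (ha : 0 < a) : ∫ y in (0 : ℝ)..x, y ^ (a - 1) = x ^ a / a := by
  rw [integral_rpow (Or.inl (by linarith)), sub_add_cancel, zero_rpow ha.ne', sub_zero]

lemma rpow_div_le (ha : 0 < a) (hb : b ≤ 1) (hx0 : 0 ≤ x) (hx1 : x < 1) :
    x ^ a / a ≤ incBeta x a b := by
  rw [← integral_rpow_sub_one ha]
  exact integral_mono_on hx0 (intervalIntegrable_rpow' (r := a - 1) (by linarith))
    (intervalIntegrable_integrand ha hb hx0 hx1) fun y hy => rpow_le_integrand hb hy hx1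

lemma le_mul_rpow_div (ha : 0 < a) (hb : b ≤ 1) (hx0 : 0 ≤ x) (hx1 : x < 1) :
    incBeta x a b ≤ (1 - x) ^ (b - 1) * (x ^ a / a) := by
  rw [← integral_rpow_sub_one ha, ← intervalIntegral.integral_const_mul]
  exact integral_mono_on hx0 (intervalIntegrable_integrand ha hb hx0 hx1)
    ((intervalIntegrable_rpow' (r := a - 1) (by linarith)).const_mul _)
    fun y hy => integrand_le hb hy hx1

lemma hasDerivAt (ha : 0 < a) (hb : b ≤ 1) (hx0 : 0 < x) (hx1 : x < 1) :
    HasDerivAt (fun x => incBeta x a b) (x ^ (a - 1) * (1 - x) ^ (b - 1)) x :=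
  integral_hasDerivAt_right (intervalIntegrable_integrand ha hb hx0.le hx1)
    (continuousOn_integrand.stronglyMeasurableAtFilter isOpen_Ioo x ⟨hx0, hx1⟩)
    (continuousOn_integrand.continuousAt (isOpen_Ioo.mem_nhds ⟨hx0, hx1⟩))

lemma tendsto_div_rpow (ha : 0 < a) (hb : b ≤ 1) :
    Tendsto (fun x => incBeta x a b / x ^ a) (𝓝[>] 0) (𝓝 (1 / a)) := by
  have hupper : Tendsto (fun x : ℝ => (1 - x) ^ (b - 1) * (1 / a)) (𝓝[>] 0) (𝓝 (1 / a)) := by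
    have hc : ContinuousAt (fun x : ℝ => (1 - x) ^ (b - 1) * (1 / a)) 0 :=
      ((continuousAt_rpow_const _ _ (Or.inl (by norm_num))).comp
        (continuous_const.sub continuous_id).continuousAt).mul continuousAt_const
    simpa using hc.tendsto.mono_left nhdsWithin_le_nhds
  have hIoo : Ioo (0 : ℝ) 1 ∈ 𝓝[>] 0 := Ioo_mem_nhdsGT one_pos
  refine tendsto_of_tendsto_of_tendsto_of_le_of_le' tendsto_const_nhds hupper ?_ ?_
  · filter_upwards [hIoo] with x hx
    rw [le_div_iff₀ (rpow_pos_of_pos hx.1 a), one_div_mul_eq_div]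
    exact rpow_div_le ha hb hx.1.le hx.2
  · filter_upwards [hIoo] with x hx
    rw [div_le_iff₀ (rpow_pos_of_pos hx.1 a), mul_assoc, one_div_mul_eq_div]
    exact le_mul_rpow_div ha hb hx.1.le hx.2

lemma tendsto_zero (ha : 0 < a) (hb : b ≤ 1) :
    Tendsto (fun x => incBeta x a b) (𝓝[>] 0) (𝓝 0) := by
  have hpow : Tendsto (fun x : ℝ => x ^ a) (𝓝[>] 0) (𝓝 0) := by
    simpa [zero_rpow ha.ne'] using
      ((continuousAt_rpow_const 0 a (Or.inr ha.le)).tendsto).mono_left nhdsWithin_le_nhds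
  have := (tendsto_div_rpow (b := b) ha hb).mul hpow
  rw [mul_zero] at this
  refine this.congr' ?_
  filter_upwards [self_mem_nhdsWithin] with x (hx : 0 < x)
  rw [div_mul_cancel₀ _ (rpow_pos_of_pos hx a).ne']

end incBeta

theorem AnalyticAt.isBigO_sub_sub_smul_deriv {𝕜 E : Type*} [NontriviallyNormedField 𝕜]
    [NormedAddCommGroup E] [NormedSpace 𝕜 E] {f : 𝕜 → E} {a : 𝕜} (hf : AnalyticAt 𝕜 f a) :
    (fun t => f t - f a - (t - a) • deriv f a) =O[𝓝 a] fun t => ‖t - a‖ ^ 2 := by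
  obtain ⟨p, hp⟩ := hf
  have hsum : ∀ y, p.partialSum 2 y = f a + y • deriv f a := fun y => by
    simp only [FormalMultilinearSeries.partialSum, Finset.sum_range_succ, Finset.sum_range_zero,
      zero_add, hp.deriv, FormalMultilinearSeries.apply_eq_pow_smul_coeff, pow_one,
      pow_zero, one_smul]
    rw [← hp.coeff_zero 1]
    rfl
  have hshift : Tendsto (fun t => t - a) (𝓝 a) (𝓝 0) := tendsto_sub_nhds_zero_iff.2 tendsto_id
  refine ((hp.isBigO_sub_partialSum_pow 2).comp_tendsto hshift).congr_left fun t => ?_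
  simp only [Function.comp_apply, hsum, add_sub_cancel, sub_sub]

lemma tendsto_div_of_tendsto_rpow_div {V : ℝ → ℝ} {a p L : ℝ} (hp : 0 < p)
    (hV : ∀ᶠ t in 𝓝[<] a, 0 ≤ V t)
    (h : Tendsto (fun t => V t ^ p / (a - t) ^ p) (𝓝[<] a) (𝓝 L)) :
    Tendsto (fun t => V t / (a - t)) (𝓝[<] a) (𝓝 (L ^ p⁻¹)) := by
  refine ((continuousAt_rpow_const L p⁻¹ (Or.inr (inv_nonneg.2 hp.le))).tendsto.comp h).congr' ?_
  filter_upwards [hV, self_mem_nhdsWithin] with t hVt (ht : t < a)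
  rw [Function.comp_apply, ← div_rpow hVt (by linarith), rpow_rpow_inv
    (div_nonneg hVt (by linarith)) hp.ne']

lemma eq_zero_and_deriv_eq_of_tendsto {U : ℝ → ℝ} {a c : ℝ} (hU : DifferentiableAt ℝ U a)
    (h : Tendsto (fun t => -U t / (a - t)) (𝓝[<] a) (𝓝 c)) : U a = 0 ∧ deriv U a = c := by
  have hfactor : ∀ᶠ t in 𝓝[<] a, -(a - t) * (-U t / (a - t)) = U t := by
    filter_upwards [self_mem_nhdsWithin] with t (ht : t < a)
    field_simp [(sub_pos.2 ht).ne']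
  have hgap : Tendsto (fun t => -(a - t)) (𝓝[<] a) (𝓝 0) := by
    simpa using
      (tendsto_sub_nhds_zero_iff.2 tendsto_id).mono_left (nhdsWithin_le_nhds (s := Iio a))
  have hzero : U a = 0 :=
    tendsto_nhds_unique (hU.continuousAt.tendsto.mono_left nhdsWithin_le_nhds)
      (by simpa using (hgap.mul h).congr' hfactor)
  refine ⟨hzero, tendsto_nhds_unique ((hasDerivAt_iff_tendsto_slope.1 hU.hasDerivAt).mono_left
    (nhdsLT_le_nhdsNE a)) (h.congr' ?_)⟩
  filter_upwards [self_mem_nhdsWithin] with t (ht : t < a)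
  rw [slope_def_field, hzero, sub_zero, ← neg_sub a t, div_neg, neg_div]

noncomputable def phase (t : ℝ) : ℝ :=
  arccos ((t - 512) / 512) - √2 * t ^ ((1 : ℝ) / 4) / 8 * incBeta (1 - t / 1024) (1 / 2) (1 / 4)

lemma rpow_quarter_1024 : (1024 : ℝ) ^ ((1 : ℝ) / 4) = 4 * √2 := by
  have h : (1024 : ℝ) = (4 * √2) ^ 4 := by
    rw [mul_pow, show (√2) ^ 4 = (√2 ^ 2) ^ 2 by ring, sq_sqrt zero_le_two]
    norm_num
  rw [h, ← rpow_natCast, ← rpow_mul (by positivity)]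
  norm_num

lemma rpow_quarter_sq {t : ℝ} (ht : 0 ≤ t) : (t ^ ((1 : ℝ) / 4)) ^ 2 = √t := by
  rw [← rpow_natCast, ← rpow_mul ht, sqrt_eq_rpow]
  norm_num

lemma sqrt_one_sub_sq {t : ℝ} (ht0 : 0 < t) :
    √(1 - ((t - 512) / 512) ^ 2) = √t * √(1024 - t) / 512 := by
  rw [show 1 - ((t - 512) / 512) ^ 2 = t * (1024 - t) / 512 ^ 2 by ring,
    sqrt_div' _ (by positivity), sqrt_mul ht0.le, sqrt_sq (by norm_num)]

lemma arccos_deriv_eq_coef_mul_integrand {t : ℝ} (ht0 : 0 < t) (ht1 : t < 1024) :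
    1 / √(1 - ((t - 512) / 512) ^ 2) / 512 = √2 * t ^ ((1 : ℝ) / 4) / 8 *
      ((1 - t / 1024) ^ ((1 : ℝ) / 2 - 1) * (1 - (1 - t / 1024)) ^ ((1 : ℝ) / 4 - 1)) / 1024 := by
  have hs : 0 < 1024 - t := by linarith
  have e1 : (1 - t / 1024) ^ ((1 : ℝ) / 2 - 1) = 32 / √(1024 - t) := by
    rw [show 1 - t / 1024 = (1024 - t) / 1024 by ring, rpow_sub_one (by positivity),
      ← sqrt_eq_rpow, sqrt_div' _ (by norm_num), show √(1024 : ℝ) = 32 by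
        rw [show (1024 : ℝ) = 32 ^ 2 by norm_num, sqrt_sq (by norm_num)]]
    field_simp
    rw [sq_sqrt hs.le]
    ring
  have e2 : (1 - (1 - t / 1024)) ^ ((1 : ℝ) / 4 - 1) = 128 * √2 * t ^ ((1 : ℝ) / 4) / t := by
    rw [sub_sub_cancel, div_rpow ht0.le (by norm_num), rpow_sub_one ht0.ne',
      rpow_sub_one (by norm_num), rpow_quarter_1024]
    field_simp
    rw [sq_sqrt zero_le_two]
    norm_num
  rw [sqrt_one_sub_sq ht0, e1, e2]
  field_simp
  rw [rpow_quarter_sq ht0.le, sq_sqrt zero_le_two]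
  linear_combination (-8192) * mul_self_sqrt ht0.le

lemma hasDerivAt_phase {t : ℝ} (ht0 : 0 < t) (ht1 : t < 1024) :
    HasDerivAt phase
      (-(√2 / 32 * t ^ (-(3 : ℝ) / 4)) * incBeta (1 - t / 1024) (1 / 2) (1 / 4)) t := by
  have hv : HasDerivAt (fun t : ℝ => (t - 512) / 512) (1 / 512) t :=
    ((hasDerivAt_id t).sub_const 512).div_const 512
  have harccos := (hasDerivAt_arccos (x := (t - 512) / 512) (by intro h; field_simp at h; linarith)
    (by intro h; field_simp at h; linarith)).comp t hv
  have hcoef : HasDerivAt (fun t : ℝ => √2 * t ^ ((1 : ℝ) / 4) / 8)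
      (√2 * ((1 / 4) * t ^ ((1 : ℝ) / 4 - 1)) / 8) t :=
    ((hasDerivAt_rpow_const (Or.inl ht0.ne')).const_mul √2).div_const 8
  have hbeta := (incBeta.hasDerivAt (a := 1 / 2) (b := 1 / 4) (x := 1 - t / 1024)
    (by norm_num) (by norm_num) (by linarith) (by linarith)).comp t
    (((hasDerivAt_id t).div_const 1024).const_sub 1)
  refine (harccos.sub (hcoef.mul hbeta)).congr_deriv ?_
  have key := arccos_deriv_eq_coef_mul_integrand ht0 ht1
  rw [show (1 : ℝ) / 4 - 1 = -3 / 4 by norm_num] at key ⊢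
  simp only [Function.comp_apply, id]
  linear_combination -key

lemma tendsto_one_sub_div_nhdsLT :
    Tendsto (fun t : ℝ => 1 - t / 1024) (𝓝[<] 1024) (𝓝[>] 0) := by
  refine tendsto_nhdsWithin_iff.2 ⟨?_, ?_⟩
  · have hc : Continuous (fun t : ℝ => 1 - t / 1024) := by fun_prop
    simpa using (hc.tendsto 1024).mono_left nhdsWithin_le_nhds
  · filter_upwards [self_mem_nhdsWithin] with t (ht : t < 1024)
    show 0 < 1 - t / 1024
    linarith

lemma tendsto_phase_zero : Tendsto phase (𝓝[<] 1024) (𝓝 0) := by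
  have harccos : Tendsto (fun t : ℝ => arccos ((t - 512) / 512)) (𝓝[<] 1024) (𝓝 0) := by
    have hc : Continuous (fun t : ℝ => arccos ((t - 512) / 512)) := by fun_prop
    have h := (hc.tendsto 1024).mono_left (nhdsWithin_le_nhds (s := Iio 1024))
    rwa [show ((1024 : ℝ) - 512) / 512 = 1 by norm_num, arccos_one] at h
  have hcoef : ContinuousAt (fun t : ℝ => √2 * t ^ ((1 : ℝ) / 4) / 8) 1024 := by
    fun_prop (disch := norm_num)
  have hbeta := (incBeta.tendsto_zero (a := 1 / 2) (b := 1 / 4) (by norm_num) (by norm_num)).comp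
    tendsto_one_sub_div_nhdsLT
  have := harccos.sub ((hcoef.tendsto.mono_left nhdsWithin_le_nhds).mul hbeta)
  rwa [mul_zero, sub_zero] at this

lemma sqrt_two_mul_rpow_1024 : √2 * (1024 : ℝ) ^ (-(3 : ℝ) / 4) = 1 / 128 := by
  rw [show -(3 : ℝ) / 4 = 1 / 4 - 1 by norm_num, rpow_sub_one (by norm_num), rpow_quarter_1024]
  linear_combination (1 / 256 : ℝ) * mul_self_sqrt zero_le_two

lemma tendsto_phase_div_rpow :
    Tendsto (fun t => phase t / (1024 - t) ^ ((3 : ℝ) / 2)) (𝓝[<] 1024) (𝓝 (1 / 98304)) := by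
  have hg : ∀ t ∈ Ioo (0 : ℝ) 1024, HasDerivAt (fun t => (1024 - t) ^ ((3 : ℝ) / 2))
      (-1 * (3 / 2) * (1024 - t) ^ ((3 : ℝ) / 2 - 1)) t := fun t ht =>
    ((hasDerivAt_id t).const_sub 1024).rpow_const (Or.inl (by simp; linarith [ht.2]))
  have hg0 : Tendsto (fun t : ℝ => (1024 - t) ^ ((3 : ℝ) / 2)) (𝓝[<] 1024) (𝓝 0) := by
    have hc : Continuous (fun t : ℝ => (1024 - t) ^ ((3 : ℝ) / 2)) :=
      (continuous_const.sub continuous_id).rpow_const fun _ => Or.inr (by norm_num)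
    have h := (hc.tendsto 1024).mono_left (nhdsWithin_le_nhds (s := Iio 1024))
    rwa [sub_self, zero_rpow (by norm_num)] at h
  refine HasDerivAt.lhopital_zero_left_on_Ioo (by norm_num)
    (fun t ht => hasDerivAt_phase ht.1 ht.2) hg
    (fun t ht => mul_ne_zero (by norm_num) (rpow_pos_of_pos (by linarith [ht.2]) _).ne')
    tendsto_phase_zero hg0 ?_
  have hcoef : ContinuousAt (fun t : ℝ => √2 / 1536 * t ^ (-(3 : ℝ) / 4)) 1024 := by
    fun_prop (disch := norm_num)
  have hbeta := (incBeta.tendsto_div_rpow (a := 1 / 2) (b := 1 / 4) (by norm_num)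
    (by norm_num)).comp tendsto_one_sub_div_nhdsLT
  have hlim := (hcoef.tendsto.mono_left nhdsWithin_le_nhds).mul hbeta
  have hval : √2 / 1536 * (1024 : ℝ) ^ (-(3 : ℝ) / 4) * (1 / (1 / 2)) = 1 / 98304 := by
    rw [div_mul_eq_mul_div, sqrt_two_mul_rpow_1024]
    norm_num
  rw [hval] at hlim
  refine hlim.congr' ?_
  filter_upwards [Ioo_mem_nhdsLT (show (0 : ℝ) < 1024 by norm_num)] with t ht
  have hx : 0 < 1 - t / 1024 := by linarith [ht.2]
  have hsqrt : (1024 - t) ^ ((3 : ℝ) / 2 - 1) = 32 * (1 - t / 1024) ^ ((1 : ℝ) / 2) := by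
    rw [show 1024 - t = 1024 * (1 - t / 1024) by ring, mul_rpow (by norm_num) hx.le]
    norm_num
  simp only [Function.comp_apply]
  rw [hsqrt]
  field_simp
  ring

lemma one_div_65536_rpow :
    ((1 : ℝ) / 65536) ^ ((3 : ℝ) / 2)⁻¹ = 1 / (1024 * 4 ^ ((1 : ℝ) / 3)) := by
  have h : (1024 : ℝ) * 4 ^ ((1 : ℝ) / 3) = 4 ^ ((16 : ℝ) / 3) := by
    rw [show (16 : ℝ) / 3 = 5 + 1 / 3 by norm_num, rpow_add (by norm_num)]
    norm_num
  rw [h, one_div, one_div, show (65536 : ℝ) = 4 ^ (8 : ℝ) by norm_num, ← rpow_neg (by norm_num),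
    ← rpow_neg (by norm_num), ← rpow_mul (by norm_num)]
  norm_num

theorem stmt_19 (B : ℝ → ℝ → ℝ → ℝ)
    (hB : ∀ x a b : ℝ, B x a b = ∫ y in (0 : ℝ)..x, y ^ (a - 1) * (1 - y) ^ (b - 1))
    (U : ℝ → ℝ)
    (hUanal : AnalyticAt ℝ U (2 ^ 10 : ℝ))
    (hUneg : ∀ t : ℝ, 0 < t → t < 2 ^ 10 → U t < 0)
    (himp : ∀ t : ℝ, 0 < t → t < 2 ^ 10 →
      (2 / 3) * (-(U t)) ^ ((3 : ℝ) / 2)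
        = Real.arccos ((t - 2 ^ 9) / 2 ^ 9) -
            Real.sqrt 2 * t ^ ((1 : ℝ) / 4) / 8 * B (1 - t / 2 ^ 10) (1 / 2) (1 / 4)) :
    (fun t : ℝ => U t - (t - 2 ^ 10) / (2 ^ 10 * 4 ^ ((1 : ℝ) / 3)))
      =O[nhds (2 ^ 10 : ℝ)] fun t : ℝ => (t - 2 ^ 10) ^ 2 := by
  obtain rfl : B = incBeta := funext fun x => funext fun a => funext (hB x a)
  rw [show (2 : ℝ) ^ 10 = 1024 by norm_num] at hUanal hUneg himp ⊢
  rw [show (2 : ℝ) ^ 9 = 512 by norm_num] at himp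
  have hnear : ∀ᶠ t in 𝓝[<] (1024 : ℝ), t ∈ Ioo 0 1024 := Ioo_mem_nhdsLT (by norm_num)
  have hratio : Tendsto (fun t => (-U t) ^ ((3 : ℝ) / 2) / (1024 - t) ^ ((3 : ℝ) / 2))
      (𝓝[<] 1024) (𝓝 (1 / 65536)) := by
    refine ((tendsto_phase_div_rpow.const_mul (3 / 2)).congr' ?_).trans_eq (by norm_num)
    filter_upwards [hnear] with t ht
    rw [phase, ← himp t ht.1 ht.2]
    ring
  have hslope := tendsto_div_of_tendsto_rpow_div (by norm_num)
    (by filter_upwards [hnear] with t ht; linarith [hUneg t ht.1 ht.2]) hratio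
  obtain ⟨hU0, hderiv⟩ := eq_zero_and_deriv_eq_of_tendsto hUanal.differentiableAt hslope
  refine hUanal.isBigO_sub_sub_smul_deriv.congr (fun t => ?_) fun t => ?_
  · rw [hU0, hderiv, one_div_65536_rpow, smul_eq_mul]
    ring
  · rw [Real.norm_eq_abs, sq_abs]
end
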